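/- arXiv:2110.11724 — 2 statements merged into one kernel-verified Lean document; each statement's English description precedes it below -/
import Mathlib

section
/- Let U be a d×d complex unitary matrix and let θ₁, θ₂ be real numbers such that e^{iθ₁} and e^{iθ₂} are two distinct eigenvalues of U. Then there exists a unit vector φ ∈ ℂ^d with |⟨φ, Uφ⟩|² = 1/2 + (1/2)·cos(θ₁ − θ₂). (This realises the relation δ(U)² = 1/2 + (1/2) cos θ between the numerical-range quantity δ(U) and the angular gap θ between a pair of eigenvalues of U.) -/
/-!
Eigenvectors `v₁, v₂` of a unitary for distinct eigenvalues `μ₁ ≠ μ₂` are orthogonal: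
`⟨v₁, v₂⟩ = ⟨Uv₁, Uv₂⟩ = conj μ₁ μ₂ ⟨v₁, v₂⟩` and `conj μ₁ = μ₁⁻¹`. Hence for unit eigenvectors the
vector `φ = (v₁ + v₂) / √2` is a unit vector with `⟨φ, Uφ⟩ = (μ₁ + μ₂) / 2`, and for
`μⱼ = e^{iθⱼ}` one has `|μ₁ + μ₂|² = 2 + 2 cos (θ₁ - θ₂)`.
-/

open Matrix ContinuousLinearMap

section
variable {𝕜 H : Type*} [RCLike 𝕜] [NormedAddCommGroup H] [InnerProductSpace 𝕜 H]

theorem ContinuousLinearMap.exists_norm_eq_one_apply_eq_smul_of_mem_spectrum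
    [FiniteDimensional 𝕜 H] {f : H →L[𝕜] H} {μ : 𝕜} (hμ : μ ∈ spectrum 𝕜 f) :
    ∃ v : H, ‖v‖ = 1 ∧ f v = μ • v := by
  have : CompleteSpace H := FiniteDimensional.complete 𝕜 H
  rw [spectrum_eq, ← Module.End.hasEigenvalue_iff_mem_spectrum] at hμ
  obtain ⟨x, hx⟩ := hμ.exists_hasEigenvector
  refine ⟨(‖x‖⁻¹ : 𝕜) • x, ?_, ?_⟩
  · rw [norm_smul, norm_inv, RCLike.norm_ofReal, abs_norm,
      inv_mul_cancel₀ (norm_ne_zero_iff.2 hx.2)]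
  · rw [map_smul, ← coe_coe, hx.apply_eq_smul, smul_comm]

theorem norm_inv_sqrt_two_smul_add_eq_one {v₁ v₂ : H} (h₁ : ‖v₁‖ = 1) (h₂ : ‖v₂‖ = 1)
    (h : inner 𝕜 v₁ v₂ = 0) : ‖(((√2)⁻¹ : ℝ) : 𝕜) • (v₁ + v₂)‖ = 1 := by
  have hsum : ‖v₁ + v₂‖ = √2 := by
    rw [← Real.sqrt_sq (norm_nonneg _), norm_add_sq (𝕜 := 𝕜), h₁, h₂, h]
    norm_num
  rw [norm_smul, RCLike.norm_ofReal, hsum, abs_of_pos (by positivity),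
    inv_mul_cancel₀ (by positivity)]

theorem inner_inv_sqrt_two_smul_add_apply_eq {v₁ v₂ : H} (h₁ : ‖v₁‖ = 1) (h₂ : ‖v₂‖ = 1)
    (h : inner 𝕜 v₁ v₂ = 0) {f : H →L[𝕜] H} {μ₁ μ₂ : 𝕜} (hf₁ : f v₁ = μ₁ • v₁)
    (hf₂ : f v₂ = μ₂ • v₂) :
    inner 𝕜 ((((√2)⁻¹ : ℝ) : 𝕜) • (v₁ + v₂)) (f ((((√2)⁻¹ : ℝ) : 𝕜) • (v₁ + v₂)))
      = (μ₁ + μ₂) / 2 := by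
  have h' : inner 𝕜 v₂ v₁ = 0 := inner_eq_zero_symm.1 h
  have hv₁ : inner 𝕜 v₁ v₁ = (1 : 𝕜) := by rw [inner_self_eq_norm_sq_to_K, h₁]; simp
  have hv₂ : inner 𝕜 v₂ v₂ = (1 : 𝕜) := by rw [inner_self_eq_norm_sq_to_K, h₂]; simp
  have hc : (((√2)⁻¹ : ℝ) : 𝕜) * (((√2)⁻¹ : ℝ) : 𝕜) = 1 / 2 := by
    rw [← RCLike.ofReal_mul, ← mul_inv, Real.mul_self_sqrt zero_le_two, RCLike.ofReal_inv,
      RCLike.ofReal_ofNat, one_div]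
  simp only [map_smul, map_add, hf₁, hf₂, inner_smul_left, inner_smul_right, inner_add_left,
    inner_add_right, h, h', hv₁, hv₂, RCLike.conj_ofReal]
  linear_combination (μ₁ + μ₂) * hc

variable [CompleteSpace H]

theorem ContinuousLinearMap.norm_eq_one_of_mem_unitary_of_apply_eq_smul
    {u : H →L[𝕜] H} (hu : u ∈ unitary (H →L[𝕜] H)) {v : H} (hv : v ≠ 0) {μ : 𝕜}
    (huv : u v = μ • v) : ‖μ‖ = 1 := by
  have := norm_map_of_mem_unitary hu v
  rw [huv, norm_smul] at this
  exact (mul_eq_right₀ (norm_ne_zero_iff.2 hv)).1 this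

theorem ContinuousLinearMap.inner_eq_zero_of_mem_unitary_of_apply_eq_smul
    {u : H →L[𝕜] H} (hu : u ∈ unitary (H →L[𝕜] H)) {v₁ v₂ : H} (hv₁ : v₁ ≠ 0) {μ₁ μ₂ : 𝕜}
    (h₁ : u v₁ = μ₁ • v₁) (h₂ : u v₂ = μ₂ • v₂) (hμ : μ₁ ≠ μ₂) : inner 𝕜 v₁ v₂ = 0 := by
  have hμ₁ : starRingEnd 𝕜 μ₁ * μ₁ = 1 := by
    rw [RCLike.conj_mul, norm_eq_one_of_mem_unitary_of_apply_eq_smul hu hv₁ h₁]; simp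
  have key := inner_map_map_of_mem_unitary hu v₁ v₂
  rw [h₁, h₂, inner_smul_left, inner_smul_right] at key
  have : (μ₁ - μ₂) * inner 𝕜 v₁ v₂ = 0 := by
    linear_combination μ₂ * inner 𝕜 v₁ v₂ * hμ₁ - μ₁ * key
  exact (mul_eq_zero.1 this).resolve_left (sub_ne_zero.2 hμ)
end

theorem Complex.norm_exp_mul_I_add_exp_mul_I_sq (θ₁ θ₂ : ℝ) :
    ‖Complex.exp (θ₁ * Complex.I) + Complex.exp (θ₂ * Complex.I)‖ ^ 2
      = 2 + 2 * Real.cos (θ₁ - θ₂) := by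
  rw [Complex.sq_norm, Complex.normSq_apply, Complex.add_re, Complex.add_im,
    Complex.exp_ofReal_mul_I_re, Complex.exp_ofReal_mul_I_re, Complex.exp_ofReal_mul_I_im,
    Complex.exp_ofReal_mul_I_im, Real.cos_sub]
  linear_combination Real.sin_sq_add_cos_sq θ₁ + Real.sin_sq_add_cos_sq θ₂

/-- If `e^{iθ₁}` and `e^{iθ₂}` are distinct eigenvalues of a unitary `U`, then there is a
unit vector `φ` with `|⟨φ, Uφ⟩|² = 1/2 + (1/2)cos(θ₁ − θ₂)`. -/
theorem exists_unit_vector_numerical_range_sq (d : ℕ)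
    (U : Matrix (Fin d) (Fin d) ℂ) (hU : U ∈ Matrix.unitaryGroup (Fin d) ℂ)
    (θ₁ θ₂ : ℝ)
    (h₁ : Complex.exp (θ₁ * Complex.I) ∈ spectrum ℂ U)
    (h₂ : Complex.exp (θ₂ * Complex.I) ∈ spectrum ℂ U)
    (hne : Complex.exp (θ₁ * Complex.I) ≠ Complex.exp (θ₂ * Complex.I)) :
    ∃ φ : EuclideanSpace ℂ (Fin d), ‖φ‖ = 1 ∧
      ‖(inner ℂ φ (Matrix.toEuclideanCLM (𝕜 := ℂ) U φ) : ℂ)‖ ^ 2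
        = 1 / 2 + (1 / 2) * Real.cos (θ₁ - θ₂) := by
  have hA : toEuclideanCLM (𝕜 := ℂ) U ∈ unitary _ := Unitary.map_mem _ hU
  rw [← AlgEquiv.spectrum_eq (toEuclideanCLM (𝕜 := ℂ) (n := Fin d))] at h₁ h₂
  obtain ⟨v₁, hv₁, hAv₁⟩ := exists_norm_eq_one_apply_eq_smul_of_mem_spectrum h₁
  obtain ⟨v₂, hv₂, hAv₂⟩ := exists_norm_eq_one_apply_eq_smul_of_mem_spectrum h₂
  have horth : inner ℂ v₁ v₂ = 0 :=
    inner_eq_zero_of_mem_unitary_of_apply_eq_smul hA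
      (ne_zero_of_norm_ne_zero (hv₁ ▸ one_ne_zero)) hAv₁ hAv₂ hne
  refine ⟨_, norm_inv_sqrt_two_smul_add_eq_one hv₁ hv₂ horth, ?_⟩
  rw [inner_inv_sqrt_two_smul_add_apply_eq hv₁ hv₂ horth hAv₁ hAv₂, norm_div, div_pow,
    Complex.norm_exp_mul_I_add_exp_mul_I_sq]
  norm_num
  ring
end

section
/- Let U be a d×d complex unitary matrix, let a ∈ ℝ and 0 ≤ θ ≤ π, and suppose that every eigenvalue of U is of the form e^{iα} for some α ∈ [a, a + θ], and that both e^{ia} and e^{i(a+θ)} are eigenvalues of U. Then the infimum over unit vectors φ ∈ ℂ^d of |⟨φ, Uφ⟩| equals cos(θ/2); equivalently, δ(U)² = 1/2 + (1/2)·cos θ. -/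
/-!
Rotate the arc so that it is centred at `1`: with `c = a + θ/2`, the operator `e^{-ic} U` is
normal with spectrum in the half-plane `Re z ≥ cos (θ/2)`. By the spectral mapping theorem so is
the spectrum of its real part, which is therefore `≥ cos (θ/2)` in the Loewner order; this bounds
`Re ⟨φ, e^{-ic} U φ⟩`, hence `|⟨φ, U φ⟩|`, from below. The bound is attained at
`φ = (u + v)/√2` for unit eigenvectors `u`, `v` of the endpoint eigenvalues `e^{ia}`, `e^{i(a+θ)}`:
they are orthogonal because `U` is normal, so `⟨φ, U φ⟩ = (e^{ia} + e^{i(a+θ)})/2`, whose modulus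
is `cos (θ/2)`.
-/

open ComplexConjugate ContinuousLinearMap Complex
open scoped ComplexStarModule InnerProductSpace

lemma Real.cos_le_cos_of_abs_le {x y : ℝ} (hxy : |y| ≤ x) (hx : x ≤ Real.pi) :
    Real.cos x ≤ Real.cos y := by
  rw [← Real.cos_abs y]
  exact Real.cos_le_cos_of_nonneg_of_le_pi (abs_nonneg y) hx hxy

lemma Complex.norm_exp_mul_I_add_exp_mul_I (x y : ℝ) :
    ‖exp (x * I) + exp (y * I)‖ = 2 * |Real.cos ((y - x) / 2)| := by
  have h : exp (x * I) + exp (y * I)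
      = exp (((x + y) / 2 : ℝ) * I) * (2 * cos ((y - x) / 2 : ℝ)) := by
    rw [two_cos, mul_add, ← exp_add, ← exp_add, add_comm (exp _)]
    congr 2 <;> push_cast <;> ring_nf
  rw [h, norm_mul, norm_exp_ofReal_mul_I, one_mul, norm_mul, ← ofReal_cos, norm_real,
    Real.norm_eq_abs]
  norm_num

variable {E : Type*} [NormedAddCommGroup E] [InnerProductSpace ℂ E]

def numericalRange (T : E →L[ℂ] E) : Set ℂ :=
  (fun x ↦ ⟪x, T x⟫_ℂ) '' Metric.sphere 0 1

lemma exists_norm_eq_one_apply_eq_smul {T : E →L[ℂ] E} {μ : ℂ}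
    (hμ : Module.End.HasEigenvalue (T : E →ₗ[ℂ] E) μ) : ∃ x : E, ‖x‖ = 1 ∧ T x = μ • x := by
  obtain ⟨x, hx⟩ := hμ.exists_hasEigenvector
  refine ⟨(‖x‖⁻¹ : ℂ) • x, norm_smul_inv_norm hx.2, ?_⟩
  rw [map_smul, smul_comm]
  congr 1
  exact hx.apply_eq_smul

variable [CompleteSpace E]

lemma ContinuousLinearMap.re_inner_realPart_apply (T : E →L[ℂ] E) (x : E) :
    RCLike.re ⟪x, (ℜ T : E →L[ℂ] E) x⟫_ℂ = RCLike.re ⟪x, T x⟫_ℂ := by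
  rw [realPart_apply_coe, _root_.smul_apply, _root_.add_apply, inner_smul_right_eq_smul,
    inner_add_right, star_eq_adjoint, adjoint_inner_right, RCLike.smul_re, map_add,
    inner_re_symm (T x)]
  ring

namespace IsStarNormal

variable {T : E →L[ℂ] E}

lemma adjoint_apply_eq_conj_smul (hT : IsStarNormal T) {μ : ℂ} {x : E} (hx : T x = μ • x) :
    adjoint T x = conj μ • x := by
  have hS : IsStarNormal (T - μ • 1) := by
    refine Commute.isStarNormal_sub ?_
    rw [star_smul, star_one]
    exact (Commute.one_right T).smul_right _
  have := (hS.adjoint_apply_eq_zero_iff x).mpr (by simp [hx])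
  rw [← star_eq_adjoint, star_sub, star_smul, star_one, star_eq_adjoint] at this
  simpa [sub_eq_zero] using this

lemma inner_eq_zero_of_apply_eq_smul (hT : IsStarNormal T) {μ ν : ℂ} {x y : E}
    (hx : T x = μ • x) (hy : T y = ν • y) (hμν : μ ≠ ν) : ⟪x, y⟫_ℂ = 0 := by
  have h : μ * ⟪x, y⟫_ℂ = ν * ⟪x, y⟫_ℂ :=
    calc μ * ⟪x, y⟫_ℂ = ⟪adjoint T x, y⟫_ℂ := by
          rw [hT.adjoint_apply_eq_conj_smul hx, inner_smul_left, conj_conj]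
      _ = ⟪x, T y⟫_ℂ := adjoint_inner_left T y x
      _ = ν * ⟪x, y⟫_ℂ := by rw [hy, inner_smul_right]
  by_contra hxy
  exact hμν (mul_right_cancel₀ hxy h)

lemma midpoint_mem_numericalRange (hT : IsStarNormal T) {μ ν : ℂ}
    (hμ : Module.End.HasEigenvalue (T : E →ₗ[ℂ] E) μ)
    (hν : Module.End.HasEigenvalue (T : E →ₗ[ℂ] E) ν) : (μ + ν) / 2 ∈ numericalRange T := by
  obtain ⟨u, hu1, hu⟩ := exists_norm_eq_one_apply_eq_smul hμ
  obtain ⟨v, hv1, hv⟩ := exists_norm_eq_one_apply_eq_smul hν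
  have huu : ⟪u, u⟫_ℂ = 1 := by rw [inner_self_eq_norm_sq_to_K, hu1]; simp
  have hvv : ⟪v, v⟫_ℂ = 1 := by rw [inner_self_eq_norm_sq_to_K, hv1]; simp
  rcases eq_or_ne μ ν with rfl | hμν
  · refine ⟨u, mem_sphere_zero_iff_norm.mpr hu1, ?_⟩
    change ⟪u, T u⟫_ℂ = _
    rw [hu, inner_smul_right, huu]
    ring
  have huv := hT.inner_eq_zero_of_apply_eq_smul hu hv hμν
  have hvu : ⟪v, u⟫_ℂ = 0 := inner_eq_zero_symm.mp huv
  have hnorm : ‖u + v‖ = √2 := by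
    rw [← Real.sqrt_mul_self (norm_nonneg _),
      norm_add_sq_eq_norm_sq_add_norm_sq_of_inner_eq_zero u v huv, hu1, hv1]
    norm_num
  have hs : conj (((√2)⁻¹ : ℝ) : ℂ) * ((√2)⁻¹ : ℝ) = 1 / 2 := by
    rw [conj_ofReal, ← ofReal_mul, ← mul_inv, Real.mul_self_sqrt zero_le_two]
    push_cast
    ring
  refine ⟨(((√2)⁻¹ : ℝ) : ℂ) • (u + v), ?_, ?_⟩
  · rw [mem_sphere_zero_iff_norm, norm_smul, hnorm, norm_real, Real.norm_eq_abs,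
      abs_of_nonneg (by positivity), inv_mul_cancel₀ (by positivity)]
  · simp only [map_smul, map_add, hu, hv, inner_smul_left, inner_smul_right, inner_add_left,
      inner_add_right, huu, hvv, huv, hvu]
    linear_combination (μ + ν) * hs

lemma le_re_of_mem_numericalRange (hT : IsStarNormal T) {r : ℝ}
    (h : ∀ z ∈ spectrum ℂ T, r ≤ z.re) {z : ℂ} (hz : z ∈ numericalRange T) : r ≤ z.re := by
  obtain ⟨x, hx, rfl⟩ := hz
  have hle : algebraMap ℝ (E →L[ℂ] E) r ≤ ℜ T := by
    rw [algebraMap_le_iff_le_spectrum (ℜ T).2, spectrum_realPart' T hT]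
    rintro _ ⟨z, hz, rfl⟩
    exact h z hz
  have := ((le_def _ _).mp hle).re_inner_nonneg_right x
  rw [_root_.sub_apply, inner_sub_right, map_sub, re_inner_realPart_apply] at this
  simpa [inner_smul_right_eq_smul, mem_sphere_zero_iff_norm.mp hx] using this

lemma cos_half_le_norm_of_mem_numericalRange (hT : IsStarNormal T) {a θ : ℝ}
    (hθ : θ ≤ 2 * Real.pi)
    (hspec : ∀ z ∈ spectrum ℂ T, ∃ α ∈ Set.Icc a (a + θ), z = exp (α * I))
    {z : ℂ} (hz : z ∈ numericalRange T) : Real.cos (θ / 2) ≤ ‖z‖ := by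
  set s : ℂˣ := Units.mk0 (exp ((-(a + θ / 2) : ℝ) * I)) (exp_ne_zero _)
  have hs : ∀ w ∈ spectrum ℂ (s • T), Real.cos (θ / 2) ≤ w.re := by
    rw [spectrum.unit_smul_eq_smul]
    rintro _ ⟨_, hw, rfl⟩
    obtain ⟨α, ⟨hα₁, hα₂⟩, rfl⟩ := hspec _ hw
    have hrot : (s : ℂ) * exp (α * I) = exp ((α - (a + θ / 2) : ℝ) * I) := by
      rw [Units.val_mk0, ← Complex.exp_add]
      push_cast
      ring_nf
    change _ ≤ ((s : ℂ) * _).re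
    rw [hrot, exp_ofReal_mul_I_re]
    exact Real.cos_le_cos_of_abs_le (abs_le.mpr ⟨by linarith, by linarith⟩) (by linarith)
  obtain ⟨x, hx, rfl⟩ := hz
  have hsz : s * ⟪x, T x⟫_ℂ ∈ numericalRange (s • T) := ⟨x, hx, by simp [Units.smul_def]⟩
  calc Real.cos (θ / 2) ≤ (s * ⟪x, T x⟫_ℂ).re := (hT.smul s).le_re_of_mem_numericalRange hs hsz
    _ ≤ ‖s * ⟪x, T x⟫_ℂ‖ := re_le_norm _
    _ = ‖⟪x, T x⟫_ℂ‖ := by rw [norm_mul, Units.val_mk0, norm_exp_ofReal_mul_I, one_mul]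

end IsStarNormal

/-- If the eigenvalues of a unitary `U` all lie on the arc `{e^{iα} : α ∈ [a, a+θ]}` with
`0 ≤ θ ≤ π`, and both endpoints `e^{ia}`, `e^{i(a+θ)}` are eigenvalues, then
`δ(U) = inf over unit vectors φ of |⟨φ, Uφ⟩|` equals `cos(θ/2)`; equivalently
`δ(U)² = 1/2 + (1/2)cos θ`. -/
theorem inf_numerical_range_unitary_arc (d : ℕ)
    (U : Matrix (Fin d) (Fin d) ℂ) (hU : U ∈ Matrix.unitaryGroup (Fin d) ℂ)
    (a θ : ℝ) (hθ0 : 0 ≤ θ) (hθπ : θ ≤ Real.pi)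
    (hspec : ∀ z ∈ spectrum ℂ U, ∃ α ∈ Set.Icc a (a + θ), z = Complex.exp (α * Complex.I))
    (ha : Complex.exp (a * Complex.I) ∈ spectrum ℂ U)
    (haθ : Complex.exp ((a + θ) * Complex.I) ∈ spectrum ℂ U) :
    sInf {r : ℝ | ∃ φ : EuclideanSpace ℂ (Fin d), ‖φ‖ = 1 ∧
        r = ‖(inner ℂ φ (Matrix.toEuclideanCLM (𝕜 := ℂ) U φ) : ℂ)‖}
      = Real.cos (θ / 2)
    ∧ Real.cos (θ / 2) ^ 2 = 1 / 2 + (1 / 2) * Real.cos θ := by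
  set T := Matrix.toEuclideanCLM (𝕜 := ℂ) U
  have hT : IsStarNormal T := by
    have := isStarNormal_of_mem_unitary hU
    infer_instance
  have hσ : spectrum ℂ T = spectrum ℂ U :=
    AlgEquiv.spectrum_eq (Matrix.toEuclideanCLM (𝕜 := ℂ) (n := Fin d)).toAlgEquiv U
  have heig : ∀ μ ∈ spectrum ℂ U,
      Module.End.HasEigenvalue (T : EuclideanSpace ℂ (Fin d) →ₗ[ℂ] _) μ := fun μ hμ ↦
    .of_mem_spectrum (by rwa [← ContinuousLinearMap.spectrum_eq, hσ])
  have hset : {r : ℝ | ∃ φ : EuclideanSpace ℂ (Fin d), ‖φ‖ = 1 ∧ r = ‖⟪φ, T φ⟫_ℂ‖}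
      = norm '' numericalRange T := by
    ext r
    simp [numericalRange, eq_comm]
  have hmid : ‖(exp (a * I) + exp ((a + θ : ℝ) * I)) / 2‖ = Real.cos (θ / 2) := by
    rw [norm_div, norm_exp_mul_I_add_exp_mul_I, add_sub_cancel_left, abs_of_nonneg
      (Real.cos_nonneg_of_mem_Icc ⟨by linarith [Real.pi_pos], by linarith⟩)]
    norm_num
  refine ⟨IsLeast.csInf_eq ?_, by rw [Real.cos_sq, mul_div_cancel₀ _ two_ne_zero]; ring⟩
  rw [hset]
  refine ⟨⟨_, hT.midpoint_mem_numericalRange (heig _ ha) (heig _ (by exact_mod_cast haθ)), hmid⟩,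
    ?_⟩
  rintro _ ⟨z, hz, rfl⟩
  exact hT.cos_half_le_norm_of_mem_numericalRange (by linarith [Real.pi_pos]) (hσ ▸ hspec) hz
end
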